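/- arXiv:1703.06344 — 3 statements merged into one kernel-verified Lean document; each statement's English description precedes it below -/
import Mathlib

section
/- Let N be a positive integer and let m, n, p, q be real numbers with m + q > n + p. Let a, b, c, d : ℝ^N × ℝ^N → ℂ be functions for which there exists a constant C > 0 such that |a(x,ξ)| ≤ C⟨ξ⟩^m, |b(x,ξ)| ≤ C⟨ξ⟩^n, |c(x,ξ)| ≤ C⟨ξ⟩^p and |d(x,ξ)| ≤ C⟨ξ⟩^q for all (x,ξ) ∈ ℝ^N × ℝ^N. Then the following are equivalent: (1) there exist c₀ > 0 and R ≥ 1 such that |a(x,ξ)d(x,ξ) − b(x,ξ)c(x,ξ)| ≥ c₀⟨ξ⟩^{m+q} for all x ∈ ℝ^N and all ξ with |ξ| ≥ R; (2) there exist c₁ > 0 and R′ ≥ 1 such that |a(x,ξ)| ≥ c₁⟨ξ⟩^m and |d(x,ξ)| ≥ c₁⟨ξ⟩^q for all x ∈ ℝ^N and all ξ with |ξ| ≥ R′. -/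
/-- The Japanese bracket `⟨ξ⟩ = (1 + |ξ|²)^{1/2}` on `ℝ^N`. -/
noncomputable def jbracket {N : ℕ} (ξ : EuclideanSpace ℝ (Fin N)) : ℝ :=
  Real.sqrt (1 + ‖ξ‖ ^ 2)

lemma jbracket_ge_one {N : ℕ} (ξ : EuclideanSpace ℝ (Fin N)) : 1 ≤ jbracket ξ := by
  rw [jbracket]
  nlinarith [Real.sq_sqrt (show (0:ℝ) ≤ 1 + ‖ξ‖^2 by positivity),
    Real.sqrt_nonneg (1 + ‖ξ‖^2), sq_nonneg ‖ξ‖]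

lemma jbracket_pos {N : ℕ} (ξ : EuclideanSpace ℝ (Fin N)) : 0 < jbracket ξ :=
  lt_of_lt_of_le one_pos (jbracket_ge_one ξ)

lemma norm_le_jbracket {N : ℕ} (ξ : EuclideanSpace ℝ (Fin N)) : ‖ξ‖ ≤ jbracket ξ := by
  rw [jbracket]
  have h := Real.sqrt_le_sqrt (show ‖ξ‖^2 ≤ 1 + ‖ξ‖^2 by linarith)
  rwa [Real.sqrt_sq (norm_nonneg ξ)] at h

lemma key_le (K ε J : ℝ) (hK : 0 ≤ K) (hε : 0 < ε) (h : K ^ (1/ε) ≤ J) : K ≤ J ^ ε := by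
  calc K = (K ^ (1/ε)) ^ ε := by
        rw [← Real.rpow_mul hK, one_div_mul_cancel hε.ne', Real.rpow_one]
    _ ≤ J ^ ε := Real.rpow_le_rpow (Real.rpow_nonneg hK _) h hε.le

lemma small_term (J ε A B s : ℝ) (hJ : 0 < J) (hB : 0 < B)
    (hKey : 2*A/B ≤ J^ε) : A * J^s ≤ B/2 * J^(s+ε) := by
  rw [Real.rpow_add hJ]
  have hJs : 0 < J^s := Real.rpow_pos_of_pos hJ s
  have h2 : 2*A ≤ B * J^ε := by rw [div_le_iff₀ hB] at hKey; linarith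
  nlinarith [mul_le_mul_of_nonneg_right h2 hJs.le]

/-- For `m + q > n + p`, uniform Douglis–Nirenberg ellipticity of the symbol matrix
`(a, b; c, d)` is equivalent to uniform ellipticity of both diagonal entries `a` and `d`. -/
theorem ellipticity_equiv_diagonal
    (N : ℕ) (hN : 0 < N) (m n p q : ℝ) (hmq : m + q > n + p)
    (a b c d : EuclideanSpace ℝ (Fin N) → EuclideanSpace ℝ (Fin N) → ℂ)
    (C : ℝ) (hC : 0 < C)
    (ha : ∀ x ξ, ‖a x ξ‖ ≤ C * jbracket ξ ^ m)
    (hb : ∀ x ξ, ‖b x ξ‖ ≤ C * jbracket ξ ^ n)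
    (hc : ∀ x ξ, ‖c x ξ‖ ≤ C * jbracket ξ ^ p)
    (hd : ∀ x ξ, ‖d x ξ‖ ≤ C * jbracket ξ ^ q) :
    (∃ c₀ > (0 : ℝ), ∃ R ≥ (1 : ℝ), ∀ x ξ, R ≤ ‖ξ‖ →
        c₀ * jbracket ξ ^ (m + q) ≤ ‖a x ξ * d x ξ - b x ξ * c x ξ‖) ↔
    (∃ c₁ > (0 : ℝ), ∃ R' ≥ (1 : ℝ), ∀ x ξ, R' ≤ ‖ξ‖ →
        c₁ * jbracket ξ ^ m ≤ ‖a x ξ‖ ∧ c₁ * jbracket ξ ^ q ≤ ‖d x ξ‖) := by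
  have hε : (0:ℝ) < m + q - (n + p) := by linarith
  constructor
  · rintro ⟨c₀, hc₀, R, hR, h⟩
    refine ⟨c₀ / (2*C), by positivity,
      max R ((2*C^2/c₀) ^ (1/(m + q - (n + p)))), le_trans hR (le_max_left _ _), ?_⟩
    intro x ξ hξ
    set J := jbracket ξ with hJdef
    have hJ1 : 1 ≤ J := jbracket_ge_one ξ
    have hJ0 : 0 < J := jbracket_pos ξ
    have hKey : 2*C^2/c₀ ≤ J ^ (m + q - (n + p)) :=
      key_le _ _ _ (by positivity) hε
        (le_trans (le_trans (le_max_right _ _) hξ) (norm_le_jbracket ξ))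
    have h1 := h x ξ (le_trans (le_max_left _ _) hξ)
    have htri : ‖a x ξ * d x ξ - b x ξ * c x ξ‖ ≤ ‖a x ξ‖ * ‖d x ξ‖ + ‖b x ξ‖ * ‖c x ξ‖ := by
      calc ‖a x ξ * d x ξ - b x ξ * c x ξ‖ ≤ ‖a x ξ * d x ξ‖ + ‖b x ξ * c x ξ‖ :=
            norm_sub_le _ _
        _ = ‖a x ξ‖ * ‖d x ξ‖ + ‖b x ξ‖ * ‖c x ξ‖ := by rw [norm_mul, norm_mul]
    have hbc : ‖b x ξ‖ * ‖c x ξ‖ ≤ C^2 * J^(n+p) := by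
      calc ‖b x ξ‖ * ‖c x ξ‖ ≤ (C * J^n) * (C * J^p) :=
            mul_le_mul (hb x ξ) (hc x ξ) (norm_nonneg _) (by positivity)
        _ = C^2 * J^(n+p) := by rw [Real.rpow_add hJ0]; ring
    have hnp : C^2 * J^(n+p) ≤ c₀/2 * J^(m+q) := by
      have := small_term J (m + q - (n + p)) (C^2) c₀ (n+p) hJ0 hc₀ hKey
      rwa [show n + p + (m + q - (n + p)) = m + q by ring] at this
    have had : c₀/2 * (J^m * J^q) ≤ ‖a x ξ‖ * ‖d x ξ‖ := by
      have hsplit : J^(m+q) = J^m * J^q := Real.rpow_add hJ0 m q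
      nlinarith [h1, htri, hbc, hnp]
    constructor
    · have h2 : c₀/2 * (J^m * J^q) ≤ ‖a x ξ‖ * (C * J^q) :=
        le_trans had (mul_le_mul_of_nonneg_left (hd x ξ) (norm_nonneg _))
      have hCJq : 0 < C * J^q := by positivity
      rw [show c₀/(2*C) * J^m = (c₀/2 * (J^m * J^q)) / (C * J^q) by
        field_simp]
      exact (div_le_iff₀ hCJq).mpr h2
    · have h2 : c₀/2 * (J^q * J^m) ≤ ‖d x ξ‖ * (C * J^m) := by
        have := le_trans had (mul_le_mul_of_nonneg_right (ha x ξ) (norm_nonneg _))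
        calc c₀/2 * (J^q * J^m) = c₀/2 * (J^m * J^q) := by ring
          _ ≤ (C * J^m) * ‖d x ξ‖ := this
          _ = ‖d x ξ‖ * (C * J^m) := by ring
      have hCJm : 0 < C * J^m := by positivity
      rw [show c₀/(2*C) * J^q = (c₀/2 * (J^q * J^m)) / (C * J^m) by
        field_simp]
      exact (div_le_iff₀ hCJm).mpr h2
  · rintro ⟨c₁, hc₁, R', hR', h⟩
    refine ⟨c₁^2 / 2, by positivity,
      max R' ((2*C^2/c₁^2) ^ (1/(m + q - (n + p)))), le_trans hR' (le_max_left _ _), ?_⟩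
    intro x ξ hξ
    set J := jbracket ξ with hJdef
    have hJ1 : 1 ≤ J := jbracket_ge_one ξ
    have hJ0 : 0 < J := jbracket_pos ξ
    have hKey : 2*C^2/c₁^2 ≤ J ^ (m + q - (n + p)) :=
      key_le _ _ _ (by positivity) hε
        (le_trans (le_trans (le_max_right _ _) hξ) (norm_le_jbracket ξ))
    obtain ⟨haL, hdL⟩ := h x ξ (le_trans (le_max_left _ _) hξ)
    have hnp : C^2 * J^(n+p) ≤ c₁^2/2 * J^(m+q) := by
      have := small_term J (m + q - (n + p)) (C^2) (c₁^2) (n+p) hJ0 (by positivity) hKey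
      rwa [show n + p + (m + q - (n + p)) = m + q by ring] at this
    have hbc : ‖b x ξ‖ * ‖c x ξ‖ ≤ C^2 * J^(n+p) := by
      calc ‖b x ξ‖ * ‖c x ξ‖ ≤ (C * J^n) * (C * J^p) :=
            mul_le_mul (hb x ξ) (hc x ξ) (norm_nonneg _) (by positivity)
        _ = C^2 * J^(n+p) := by rw [Real.rpow_add hJ0]; ring
    have had : c₁^2 * J^(m+q) ≤ ‖a x ξ‖ * ‖d x ξ‖ := by
      have hsplit : J^(m+q) = J^m * J^q := Real.rpow_add hJ0 m q
      have := mul_le_mul haL hdL (by positivity) (norm_nonneg _)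
      rw [hsplit]; nlinarith
    have htri : ‖a x ξ‖ * ‖d x ξ‖ - ‖b x ξ‖ * ‖c x ξ‖ ≤ ‖a x ξ * d x ξ - b x ξ * c x ξ‖ := by
      have := norm_sub_norm_le (a x ξ * d x ξ) (b x ξ * c x ξ)
      rwa [norm_mul, norm_mul] at this
    linarith
end

section
/- Let X be a complex Banach space and let A be a closed unbounded linear operator in X (a linear map from a subspace Dom(A) ⊆ X to X whose graph is closed in X × X). Suppose A has a left approximate inverse, i.e. there exist a bounded (continuous) linear operator R on X and a compact linear operator K on X such that R(A x) = x + K x for every x ∈ Dom(A). Then the range Ran(A) is a closed subspace of X and the kernel Ker(A) is finite-dimensional. -/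
/-!
Since `A` is closed, its graph `G` is a Banach space, and on it the second projection `T`
satisfies `‖g‖ ≤ M ‖T g‖ + ‖C g‖` with `C = K ∘ fst` compact, because `x = R (A x) - K x`.
Such an estimate makes `e ↦ (T e, C e)` antilipschitz, hence a closed embedding, so bounded
sequences along which `T` converges have convergent subsequences. On `ker T` the compact operator
`C` is itself a closed embedding, so `ker T` is finite-dimensional by Riesz's theorem. On a closed
complement `W` of `ker T`, the image under `T` of the unit sphere is closed and misses `0`, so `T`
is bounded below on `W`, and `T '' W = range T` is closed.
-/

open Filter Topology Set Metric Bornology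
open scoped NNReal

section Riesz

variable {𝕜 E Z : Type*} [NontriviallyNormedField 𝕜] [CompleteSpace 𝕜]
  [AddCommGroup E] [Module 𝕜 E] [TopologicalSpace E] [T2Space E] [IsTopologicalAddGroup E]
  [ContinuousSMul 𝕜 E] [TopologicalSpace Z]

theorem FiniteDimensional.of_isCompactOperator_of_isClosedEmbedding {f : E → Z}
    (hf : IsCompactOperator f) (hf' : IsClosedEmbedding f) : FiniteDimensional 𝕜 E :=
  let ⟨K, hK, hKf⟩ := hf
  .of_isCompactOperator_id ⟨f ⁻¹' K, hf'.isCompact_preimage hK, hKf⟩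

end Riesz

namespace ContinuousLinearMap

section NontriviallyNormedField

variable {𝕜 E F Z : Type*} [NontriviallyNormedField 𝕜]
  [NormedAddCommGroup E] [NormedSpace 𝕜 E] [NormedAddCommGroup F] [NormedSpace 𝕜 F]
  [NormedAddCommGroup Z] [NormedSpace 𝕜 Z]
  {T : E →L[𝕜] F} {C : E →L[𝕜] Z} {M : ℝ≥0}

theorem antilipschitz_prod_of_norm_le (hTC : ∀ e, ‖e‖ ≤ M * ‖T e‖ + ‖C e‖) :
    AntilipschitzWith (M + 1) (T.prod C) :=
  (T.prod C).antilipschitz_of_bound fun e ↦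
    calc ‖e‖ ≤ M * ‖T e‖ + ‖C e‖ := hTC e
      _ ≤ M * ‖T.prod C e‖ + ‖T.prod C e‖ := by
        gcongr
        exacts [_root_.norm_fst_le (T.prod C e), _root_.norm_snd_le (T.prod C e)]
      _ = ↑(M + 1) * ‖T.prod C e‖ := by push_cast; ring

variable [CompleteSpace E]

theorem exists_tendsto_subseq_of_norm_le (hC : IsCompactOperator C)
    (hTC : ∀ e, ‖e‖ ≤ M * ‖T e‖ + ‖C e‖) {S : Set E} (hS : IsBounded S) {u : ℕ → E}
    (hu : ∀ n, u n ∈ S) {y : F} (hy : Tendsto (T ∘ u) atTop (𝓝 y)) :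
    ∃ e, ∃ φ : ℕ → ℕ, StrictMono φ ∧ Tendsto (u ∘ φ) atTop (𝓝 e) := by
  obtain ⟨L, hL, hCL⟩ := hC.image_subset_compact_of_bounded (f := C.toLinearMap) hS
  obtain ⟨z, -, φ, hφ, hz⟩ := hL.tendsto_subseq fun n ↦ hCL ⟨u n, hu n, rfl⟩
  have hJ := (antilipschitz_prod_of_norm_le hTC).isClosedEmbedding (T.prod C).uniformContinuous
  have hlim : Tendsto (T.prod C ∘ u ∘ φ) atTop (𝓝 (y, z)) :=
    (hy.comp hφ.tendsto_atTop).prodMk_nhds hz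
  obtain ⟨e, he⟩ : (y, z) ∈ range (T.prod C) :=
    hJ.isClosed_range.mem_of_tendsto hlim (.of_forall fun n ↦ mem_range_self _)
  exact ⟨e, φ, hφ, hJ.isInducing.tendsto_nhds_iff.2 (he ▸ hlim)⟩

theorem isClosed_image_of_norm_le (hC : IsCompactOperator C)
    (hTC : ∀ e, ‖e‖ ≤ M * ‖T e‖ + ‖C e‖) {S : Set E} (hS : IsClosed S) (hSb : IsBounded S) :
    IsClosed (T '' S) := by
  refine isClosed_of_closure_subset fun y hy ↦ ?_
  obtain ⟨v, hvS, hv⟩ := mem_closure_iff_seq_limit.1 hy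
  choose u huS hTu using hvS
  rw [← funext hTu] at hv
  obtain ⟨e, φ, hφ, he⟩ := exists_tendsto_subseq_of_norm_le hC hTC hSb huS hv
  exact ⟨e, hS.mem_of_tendsto he (.of_forall fun n ↦ huS _),
    tendsto_nhds_unique ((T.continuous.tendsto e).comp he) (hv.comp hφ.tendsto_atTop)⟩

theorem finiteDimensional_ker_of_norm_le [CompleteSpace 𝕜] (hC : IsCompactOperator C)
    (hTC : ∀ e, ‖e‖ ≤ M * ‖T e‖ + ‖C e‖) : FiniteDimensional 𝕜 T.ker := by
  set C' := C.comp T.ker.subtypeL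
  have hC' : AntilipschitzWith 1 C' :=
    C'.antilipschitz_of_bound fun e ↦ by simpa [C', e.2] using hTC e
  exact .of_isCompactOperator_of_isClosedEmbedding (hC.comp_clm _)
    (hC'.isClosedEmbedding C'.uniformContinuous)

end NontriviallyNormedField

section RCLike

variable {𝕜 E F Z : Type*} [RCLike 𝕜]
  [NormedAddCommGroup E] [NormedSpace 𝕜 E] [CompleteSpace E]
  [NormedAddCommGroup F] [NormedSpace 𝕜 F] [NormedAddCommGroup Z] [NormedSpace 𝕜 Z]
  {T : E →L[𝕜] F} {C : E →L[𝕜] Z} {M : ℝ≥0}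

theorem exists_antilipschitzWith_of_injective_of_norm_le (hC : IsCompactOperator C)
    (hTC : ∀ e, ‖e‖ ≤ M * ‖T e‖ + ‖C e‖) (hT : Function.Injective T) :
    ∃ K, AntilipschitzWith K T := by
  have hzero : (0 : F) ∉ T '' sphere 0 1 := by
    rintro ⟨e, he, hTe⟩
    rw [hT (hTe.trans (map_zero T).symm)] at he
    simp at he
  obtain ⟨δ, hδ, hball⟩ := Metric.isOpen_iff.1
    (isClosed_image_of_norm_le hC hTC isClosed_sphere isBounded_sphere).isOpen_compl 0 hzero
  refine ⟨(Real.toNNReal δ)⁻¹, antilipschitz_of_bound_of_norm_one T fun e he ↦ ?_⟩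
  have hδe : δ ≤ ‖T e‖ :=
    not_lt.1 fun h ↦ hball (mem_ball_zero_iff.2 h) ⟨e, mem_sphere_zero_iff_norm.2 he, rfl⟩
  rw [NNReal.coe_inv, Real.coe_toNNReal _ hδ.le]
  exact (le_inv_mul_iff₀ hδ).2 (by simpa using hδe)

theorem isClosed_range_of_norm_le (hC : IsCompactOperator C)
    (hTC : ∀ e, ‖e‖ ≤ M * ‖T e‖ + ‖C e‖) : IsClosed (range T) := by
  have := finiteDimensional_ker_of_norm_le hC hTC
  obtain ⟨W, hW, hWc⟩ :=
    (Submodule.ClosedComplemented.of_finiteDimensional T.ker).exists_isClosed_isCompl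
  have := hW.completeSpace_coe
  have hinj : Function.Injective (T.domRestrict W) := by
    refine (injective_iff_map_eq_zero _).2 fun w hw ↦ Subtype.ext ?_
    exact Submodule.disjoint_def.1 hWc.disjoint w hw w.2
  obtain ⟨K, hK⟩ := exists_antilipschitzWith_of_injective_of_norm_le
    (T := T.domRestrict W) (C := C.comp W.subtypeL) (hC.comp_clm W.subtypeL)
    (fun w ↦ hTC w) hinj
  have hrange : range (T.domRestrict W) = range T := by
    calc range (T.domRestrict W) = T '' W := by ext; simp
      _ = range T := by
        have := congrArg ((↑) : Submodule 𝕜 F → Set F)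
          (Submodule.map_eq_range_iff.2 hWc.symm.codisjoint)
        rwa [Submodule.map_coe, LinearMap.coe_range] at this
  exact hrange ▸ hK.isClosed_range (T.domRestrict W).uniformContinuous

end RCLike

end ContinuousLinearMap

namespace LinearPMap

variable {𝕜 E F : Type*} [NontriviallyNormedField 𝕜]
  [NormedAddCommGroup E] [NormedSpace 𝕜 E] [NormedAddCommGroup F] [NormedSpace 𝕜 F]
  (A : E →ₗ.[𝕜] F)

def graphFst : A.graph →L[𝕜] E := (ContinuousLinearMap.fst 𝕜 E F).comp A.graph.subtypeL

def graphSnd : A.graph →L[𝕜] F := (ContinuousLinearMap.snd 𝕜 E F).comp A.graph.subtypeL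

theorem range_graphSnd : range A.graphSnd = range A.toFun := by
  ext y
  refine Iff.trans ?_ mem_range_iff.symm
  simp [graphSnd]

theorem finiteDimensional_ker_of_finiteDimensional_ker_graphSnd
    [FiniteDimensional 𝕜 A.graphSnd.ker] : FiniteDimensional 𝕜 (LinearMap.ker A.toFun) := by
  let Γ : A.domain →ₗ[𝕜] A.graph :=
    LinearMap.codRestrict A.graph (A.domain.subtype.prod A.toFun) fun x ↦ A.mem_graph x
  have hΓ : Function.Injective Γ := fun x y hxy ↦ Subtype.ext congr(($hxy : E × F).1)
  have hle : (LinearMap.ker A.toFun).map Γ ≤ A.graphSnd.ker := by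
    rintro _ ⟨x, hx, rfl⟩
    exact hx
  have := Submodule.finiteDimensional_of_le hle
  exact Module.Finite.equiv (Submodule.equivMapOfInjective Γ hΓ _).symm

theorem norm_le_of_comp_eq_id_add {R : F →L[𝕜] E} {K : E →L[𝕜] E}
    (h : ∀ x : A.domain, R (A x) = x + K x) (g : A.graph) :
    ‖g‖ ≤ (‖R‖₊ + 1 : ℝ≥0) * ‖A.graphSnd g‖ + ‖(K ∘L A.graphFst) g‖ := by
  obtain ⟨⟨x, y⟩, hg⟩ := g
  obtain ⟨d, rfl, rfl⟩ := A.mem_graph_iff.1 hg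
  have hd : ‖(d : E)‖ ≤ ‖R‖ * ‖A d‖ + ‖K d‖ :=
    calc ‖(d : E)‖ = ‖R (A d) - K d‖ := by rw [h d, add_sub_cancel_right]
      _ ≤ ‖R (A d)‖ + ‖K d‖ := norm_sub_le _ _
      _ ≤ ‖R‖ * ‖A d‖ + ‖K d‖ := by gcongr; exact R.le_opNorm _
  show max ‖(d : E)‖ ‖A d‖ ≤ (‖R‖ + 1) * ‖A d‖ + ‖K d‖
  have := mul_nonneg (norm_nonneg R) (norm_nonneg (A d))
  exact max_le (by linarith [norm_nonneg (A d)]) (by linarith [norm_nonneg (K d)])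

end LinearPMap

/-- A closed unbounded operator in a Banach space admitting a left approximate inverse
(`R A = I + K` with `R` bounded and `K` compact) has closed range and
finite-dimensional kernel. -/
theorem closedRange_and_finiteDimensional_ker_of_left_approx_inverse
    (X : Type*) [NormedAddCommGroup X] [NormedSpace ℂ X] [CompleteSpace X]
    (A : X →ₗ.[ℂ] X) (hA : A.IsClosed)
    (R K : X →L[ℂ] X) (hK : IsCompactOperator K)
    (h : ∀ x : A.domain, R (A x) = (x : X) + K (x : X)) :
    IsClosed ((LinearMap.range A.toFun : Submodule ℂ X) : Set X) ∧
    FiniteDimensional ℂ (LinearMap.ker A.toFun) := by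
  have : CompleteSpace A.graph := hA.completeSpace_coe
  have hC : IsCompactOperator (K ∘L A.graphFst) := hK.comp_clm _
  have hTC := A.norm_le_of_comp_eq_id_add h
  have := ContinuousLinearMap.finiteDimensional_ker_of_norm_le hC hTC
  refine ⟨?_, A.finiteDimensional_ker_of_finiteDimensional_ker_graphSnd⟩
  rw [LinearMap.coe_range, ← A.range_graphSnd]
  exact ContinuousLinearMap.isClosed_range_of_norm_le hC hTC
end

section
/- Let H be a complex Hilbert space and let S be a closed unbounded linear operator in H (a linear map from a subspace Dom(S) ⊆ H to H with closed graph) whose range Ran(S) is closed. Let P be the orthogonal projection of H onto the closure of Ker(S) and let Q be the orthogonal projection of H onto the orthogonal complement Ran(S)^⊥. Then there exists a bounded (continuous) linear operator S† on H, the generalized inverse of S, such that: S† f ∈ Dom(S) for all f ∈ H; S(S† f) = f − Q f for all f ∈ H; and S†(S u) = u − P u for all u ∈ Dom(S). -/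
/-!
The restriction `S̃` of `S` to `Dom S ∩ (Ker S)ᗮ` is closed (`Ker S` is closed because the graph
is), injective, and has the same range as `S`: every `u ∈ Dom S` differs by an element of the
kernel from its component in `(Ker S)ᗮ`. Hence `S̃⁻¹` is a closed operator defined on the complete
space `Ran S`, so it is bounded by the closed graph theorem, and `S† = S̃⁻¹ ∘ (I - Q)`.
-/

namespace LinearPMap

variable {R E F : Type*} [CommRing R] [AddCommGroup E] [AddCommGroup F] [Module R E] [Module R F]

def ker (f : E →ₗ.[R] F) : Submodule R E :=
  (LinearMap.ker f.toFun).map f.domain.subtype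

theorem mem_ker_iff_mem_graph {f : E →ₗ.[R] F} {x : E} : x ∈ f.ker ↔ (x, 0) ∈ f.graph := by
  simp only [ker, Submodule.mem_map, LinearMap.mem_ker, Submodule.coe_subtype, mem_graph_iff]
  exact ⟨fun ⟨y, hy, hyx⟩ => ⟨y, hyx, hy⟩, fun ⟨y, hyx, hy⟩ => ⟨y, hy, hyx⟩⟩

theorem mem_domRestrict_graph_iff {f : E →ₗ.[R] F} {S : Submodule R E} {x : E} {y : F} :
    (x, y) ∈ (f.domRestrict S).graph ↔ (x, y) ∈ f.graph ∧ x ∈ S := by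
  simp only [mem_graph_iff]
  constructor
  · rintro ⟨z, rfl, rfl⟩
    exact ⟨⟨⟨z, z.2.2⟩, rfl, (domRestrict_apply rfl).symm⟩, z.2.1⟩
  · rintro ⟨⟨z, rfl, rfl⟩, hS⟩
    exact ⟨⟨z, hS, z.2⟩, rfl, domRestrict_apply rfl⟩

theorem exists_eq_sub_of_mem_ker {f : E →ₗ.[R] F} (x : f.domain) {k : E} (hk : k ∈ f.ker) :
    ∃ y : f.domain, (y : E) = x - k ∧ f y = f x := by
  obtain ⟨k, hk', rfl⟩ := Submodule.mem_map.1 hk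
  exact ⟨x - k, rfl, by rw [map_sub, sub_eq_self]; exact LinearMap.mem_ker.1 hk'⟩

section Topological

variable [TopologicalSpace E] [TopologicalSpace F]

theorem IsClosed.isClosed_ker {f : E →ₗ.[R] F} (hf : f.IsClosed) :
    _root_.IsClosed (f.ker : Set E) := by
  have : (f.ker : Set E) = (fun x : E => (x, (0 : F))) ⁻¹' f.graph := by
    ext x; exact mem_ker_iff_mem_graph
  rw [this]
  exact hf.preimage (continuous_id.prodMk continuous_const)

theorem IsClosed.domRestrict {f : E →ₗ.[R] F} (hf : f.IsClosed) {S : Submodule R E}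
    (hS : _root_.IsClosed (S : Set E)) : (f.domRestrict S).IsClosed := by
  have : ((f.domRestrict S).graph : Set (E × F)) = (f.graph : Set (E × F)) ∩ Prod.fst ⁻¹' S := by
    ext ⟨x, y⟩; exact mem_domRestrict_graph_iff
  rw [LinearPMap.IsClosed, this]
  exact hf.inter (hS.preimage continuous_fst)

end Topological

section Banach

variable {𝕜 E F : Type*} [NontriviallyNormedField 𝕜] [NormedAddCommGroup E] [NormedSpace 𝕜 E]
  [CompleteSpace E] [NormedAddCommGroup F] [NormedSpace 𝕜 F] [CompleteSpace F]

theorem IsClosed.continuous_of_isClosed_domain {f : E →ₗ.[𝕜] F} (hf : f.IsClosed)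
    (hdom : _root_.IsClosed (f.domain : Set E)) : Continuous f := by
  have : CompleteSpace f.domain := hdom.completeSpace_coe
  refine f.toFun.continuous_of_isClosed_graph ?_
  have : (f.toFun.graph : Set (f.domain × F)) = Prod.map Subtype.val id ⁻¹' f.graph := by
    ext ⟨x, y⟩
    simp [LinearMap.mem_graph_iff, mem_graph_iff, eq_comm]
  rw [this]
  exact hf.preimage (continuous_subtype_val.prodMap continuous_id)

theorem IsClosed.exists_continuous_inverse {f : E →ₗ.[𝕜] F} (hf : f.IsClosed)
    (hker : LinearMap.ker f.toFun = ⊥) (hran : _root_.IsClosed (LinearMap.range f.toFun : Set F)) :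
    ∃ T : LinearMap.range f.toFun →L[𝕜] E,
      ∀ (x : f.domain) (y : LinearMap.range f.toFun), T y = x ↔ f x = y := by
  have hdom : f.inverse.domain = LinearMap.range f.toFun := inverse_domain
  have hcont := ((inverse_closed_iff hker).2 hf).continuous_of_isClosed_domain (hdom ▸ hran)
  refine ⟨.comp ⟨f.inverse.toFun, hcont⟩ (ContinuousLinearEquiv.ofEq _ _ hdom.symm : _ →L[𝕜] _),
    fun x y => ⟨fun hyx => ?_, fun hxy => inverse_apply_eq hker hxy⟩⟩
  obtain ⟨x', hx'⟩ := y.2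
  have : x = x' := Subtype.ext (hyx.symm.trans (inverse_apply_eq hker hx'))
  exact this ▸ hx'

end Banach

section InnerProduct

variable {𝕜 E F : Type*} [RCLike 𝕜] [NormedAddCommGroup E] [InnerProductSpace 𝕜 E]
  [AddCommGroup F] [Module 𝕜 F]

theorem ker_domRestrict_orthogonal_ker (f : E →ₗ.[𝕜] F) :
    LinearMap.ker (f.domRestrict f.kerᗮ).toFun = ⊥ := by
  refine (LinearMap.ker_eq_bot').2 fun x hx => Subtype.ext ?_
  have hxK : (x : E) ∈ f.ker := ⟨⟨x, x.2.2⟩, (domRestrict_apply rfl).symm.trans hx, rfl⟩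
  exact Submodule.disjoint_def.1 f.ker.orthogonal_disjoint _ hxK x.2.1

theorem range_domRestrict_orthogonal_ker (f : E →ₗ.[𝕜] F) [f.ker.HasOrthogonalProjection] :
    LinearMap.range (f.domRestrict f.kerᗮ).toFun = LinearMap.range f.toFun := by
  refine le_antisymm ?_ fun _ ⟨x, hx⟩ => ?_
  · rintro _ ⟨x, rfl⟩
    exact ⟨⟨x, x.2.2⟩, (domRestrict_apply rfl).symm⟩
  obtain ⟨k, hk, z, hz, hxkz⟩ := f.ker.exists_add_mem_mem_orthogonal (x : E)
  obtain ⟨y, hyz, hyx⟩ := exists_eq_sub_of_mem_ker x hk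
  rw [hxkz, add_sub_cancel_left] at hyz
  exact ⟨⟨y, hyz ▸ hz, y.2⟩, (domRestrict_apply rfl).trans (hyx.trans hx)⟩

end InnerProduct

end LinearPMap

theorem Submodule.eq_zero_of_mem_orthogonal_of_sub_mem {𝕜 E : Type*} [RCLike 𝕜]
    [NormedAddCommGroup E] [InnerProductSpace 𝕜 E] {K : Submodule 𝕜 E} {x y : E} (hx : x ∈ K)
    (hy : y ∈ Kᗮ) (hxy : x - y ∈ K) : y = 0 := by
  refine disjoint_def.1 K.orthogonal_disjoint y ?_ hy
  simpa only [sub_sub_cancel] using K.sub_mem hx hxy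

open LinearPMap

/-- Existence of the generalized inverse of a closed unbounded operator `S` with closed
range in a Hilbert space: there is a bounded operator `S†` mapping into `Dom(S)` with
`S S† = I - Q` and `S† S = I - P`, where `P` is the orthogonal projection onto the
closure of `Ker S` and `Q` the orthogonal projection onto `(Ran S)ᗮ`. -/
theorem exists_generalized_inverse
    (H : Type*) [NormedAddCommGroup H] [InnerProductSpace ℂ H] [CompleteSpace H]
    (S : H →ₗ.[ℂ] H) (hS : S.IsClosed)
    (hRan : IsClosed ((LinearMap.range S.toFun : Submodule ℂ H) : Set H))
    (P Q : H →L[ℂ] H)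
    (hP : ∀ f : H,
      P f ∈ ((LinearMap.ker S.toFun).map S.domain.subtype).topologicalClosure ∧
      f - P f ∈ (((LinearMap.ker S.toFun).map S.domain.subtype).topologicalClosure)ᗮ)
    (hQ : ∀ f : H,
      Q f ∈ (LinearMap.range S.toFun)ᗮ ∧
      f - Q f ∈ ((LinearMap.range S.toFun)ᗮ)ᗮ) :
    ∃ Sd : H →L[ℂ] H,
      (∀ f : H, ∃ hf : Sd f ∈ S.domain, S ⟨Sd f, hf⟩ = f - Q f) ∧
      (∀ u : S.domain, Sd (S u) = (u : H) - P (u : H)) := by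
  have hK : IsClosed (S.ker : Set H) := hS.isClosed_ker
  have : CompleteSpace S.ker := hK.completeSpace_coe
  have hRan₀ := range_domRestrict_orthogonal_ker S
  obtain ⟨T, hT⟩ := (hS.domRestrict S.ker.isClosed_orthogonal).exists_continuous_inverse
    (ker_domRestrict_orthogonal_ker S) (hRan₀ ▸ hRan)
  have hQR : ∀ f, f - Q f ∈ LinearMap.range (S.domRestrict S.kerᗮ).toFun := fun f => by
    rw [hRan₀, ← hRan.submodule_topologicalClosure_eq, ← Submodule.orthogonal_orthogonal_eq_closure]
    exact (hQ f).2
  refine ⟨T ∘L (ContinuousLinearMap.id ℂ H - Q).codRestrict _ hQR, fun f => ?_, fun u => ?_⟩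
  · obtain ⟨x, hx⟩ := hQR f
    have hTx : T ⟨f - Q f, hQR f⟩ = x := (hT x _).2 hx
    exact ⟨hTx ▸ x.2.2, (domRestrict_apply hTx.symm).symm.trans hx⟩
  · have hSuR : S u ∈ LinearMap.range S.toFun := ⟨u, rfl⟩
    have hQSu : Q (S u) = 0 :=
      Submodule.eq_zero_of_mem_orthogonal_of_sub_mem hSuR (hQ (S u)).1 (hRan₀ ▸ hQR (S u))
    obtain ⟨hPK, hPK'⟩ : P u ∈ S.ker ∧ (u : H) - P u ∈ S.kerᗮ :=
      hK.submodule_topologicalClosure_eq ▸ hP u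
    obtain ⟨v, hvu, hv⟩ := exists_eq_sub_of_mem_ker u hPK
    have hTSu : T ⟨S u, hRan₀ ▸ hSuR⟩ = v :=
      (hT ⟨v, hvu ▸ hPK', v.2⟩ _).2 ((domRestrict_apply rfl).trans hv)
    have hproj : (ContinuousLinearMap.id ℂ H - Q).codRestrict _ hQR (S u) = ⟨S u, hRan₀ ▸ hSuR⟩ :=
      Subtype.ext <| show S u - Q (S u) = S u by rw [hQSu, sub_zero]
    rw [ContinuousLinearMap.comp_apply, hproj, hTSu, hvu]
end
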